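/- arXiv:2302.10036 — 5 statements merged into one kernel-verified Lean document; each statement's English description precedes it below -/
import Mathlib

section
/- Let L_1, ..., L_Λ be positive integers with Λ ≥ 2. Then the sequence t ↦ e_{t+1}(L)/e_t(L) for t ∈ {0, 1, ..., Λ-1}, extended by the value 0 at t = Λ, is strictly decreasing and strictly convex in t. -/
open Finset

/-- The `k`-th elementary symmetric polynomial of `x : Fin n → ℝ`, with
`esymm x 0 = 1` and `esymm x k = 0` for `k > n`. -/
noncomputable def esymm {n : ℕ} (x : Fin n → ℝ) (k : ℕ) : ℝ :=
  ∑ q ∈ (Finset.univ : Finset (Fin n)).powersetCard k, ∏ i ∈ q, x i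

/- ### Auxiliary development -/

/-- `ℤ`-indexed elementary symmetric function of a multiset, zero for negative index. -/
noncomputable def eZ (s : Multiset ℝ) (k : ℤ) : ℝ :=
  if 0 ≤ k then s.esymm k.toNat else 0

lemma mesymm_zero (s : Multiset ℝ) : s.esymm 0 = 1 := by
  simp [Multiset.esymm, Multiset.powersetCard_zero_left]

lemma mesymm_cons (a : ℝ) (s : Multiset ℝ) (n : ℕ) :
    (a ::ₘ s).esymm (n + 1) = s.esymm (n + 1) + a * s.esymm n := by
  simp [Multiset.esymm, Multiset.powersetCard_cons, Multiset.map_map, Function.comp_def,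
    Multiset.sum_map_mul_left]

lemma eZ_zero (s : Multiset ℝ) : eZ s 0 = 1 := by
  simp [eZ, mesymm_zero]

lemma eZ_neg (s : Multiset ℝ) {k : ℤ} (hk : k < 0) : eZ s k = 0 := by
  simp [eZ, not_le.mpr hk]

lemma eZ_cons (a : ℝ) (s : Multiset ℝ) (k : ℤ) :
    eZ (a ::ₘ s) k = eZ s k + a * eZ s (k - 1) := by
  rcases lt_trichotomy k 0 with hk | hk | hk
  · rw [eZ_neg _ hk, eZ_neg _ hk, eZ_neg _ (by omega : k - 1 < 0)]
    ring
  · subst hk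
    rw [eZ_zero, eZ_zero, eZ_neg _ (by omega : (0:ℤ) - 1 < 0)]
    ring
  · obtain ⟨n, rfl⟩ : ∃ n : ℕ, k = (n : ℤ) + 1 := ⟨(k - 1).toNat, by omega⟩
    simp only [eZ, if_pos (by omega : (0:ℤ) ≤ (n:ℤ) + 1),
      if_pos (by omega : (0:ℤ) ≤ (n:ℤ) + 1 - 1)]
    rw [show ((n:ℤ) + 1).toNat = n + 1 by omega, show ((n:ℤ) + 1 - 1).toNat = n by omega,
      mesymm_cons]

lemma eZ_empty (k : ℤ) : eZ (0 : Multiset ℝ) k = if k = 0 then 1 else 0 := by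
  rcases lt_trichotomy k 0 with hk | hk | hk
  · rw [eZ_neg _ hk, if_neg (by omega)]
  · subst hk; rw [eZ_zero]; simp
  · obtain ⟨n, rfl⟩ : ∃ n : ℕ, k = (n : ℤ) + 1 := ⟨(k - 1).toNat, by omega⟩
    rw [if_neg (by omega)]
    simp only [eZ, if_pos (by omega : (0:ℤ) ≤ (n:ℤ) + 1)]
    rw [show ((n:ℤ) + 1).toNat = n + 1 by omega]
    simp [Multiset.esymm, Multiset.powersetCard_zero_right]

lemma eZ_nonneg {s : Multiset ℝ} (h : ∀ x ∈ s, 0 ≤ x) : ∀ k : ℤ, 0 ≤ eZ s k := by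
  induction s using Multiset.induction_on with
  | empty =>
    intro k
    rw [eZ_empty]
    split_ifs <;> norm_num
  | cons a u ih =>
    intro k
    have ha : 0 ≤ a := h a (Multiset.mem_cons_self a u)
    have hu : ∀ x ∈ u, 0 ≤ x := fun x hx => h x (Multiset.mem_cons_of_mem hx)
    rw [eZ_cons]
    exact add_nonneg (ih hu k) (mul_nonneg ha (ih hu (k - 1)))

lemma eZ_eq_zero {s : Multiset ℝ} : ∀ {k : ℤ}, (Multiset.card s : ℤ) < k → eZ s k = 0 := by
  induction s using Multiset.induction_on with
  | empty =>
    intro k hk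
    simp only [Multiset.card_zero, Nat.cast_zero] at hk
    rw [eZ_empty, if_neg (by omega)]
  | cons a u ih =>
    intro k hk
    simp only [Multiset.card_cons, Nat.cast_add, Nat.cast_one] at hk
    rw [eZ_cons, ih (by omega), ih (by omega)]
    ring

lemma eZ_pos {s : Multiset ℝ} (h : ∀ x ∈ s, 0 < x) :
    ∀ {k : ℤ}, 0 ≤ k → k ≤ (Multiset.card s : ℤ) → 0 < eZ s k := by
  induction s using Multiset.induction_on with
  | empty =>
    intro k h0 hk
    simp only [Multiset.card_zero, Nat.cast_zero] at hk
    have : k = 0 := le_antisymm hk h0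
    subst this
    rw [eZ_zero]; norm_num
  | cons a u ih =>
    intro k h0 hk
    have ha : 0 < a := h a (Multiset.mem_cons_self a u)
    have hu : ∀ x ∈ u, 0 < x := fun x hx => h x (Multiset.mem_cons_of_mem hx)
    have hu' : ∀ x ∈ u, 0 ≤ x := fun x hx => (hu x hx).le
    simp only [Multiset.card_cons, Nat.cast_add, Nat.cast_one] at hk
    rw [eZ_cons]
    rcases le_or_gt k (Multiset.card u : ℤ) with hle | hgt
    · exact add_pos_of_pos_of_nonneg (ih hu h0 hle)
        (mul_nonneg ha.le (eZ_nonneg hu' (k - 1)))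
    · rw [eZ_eq_zero hgt, zero_add]
      exact mul_pos ha (ih hu (by omega) (by omega))

/-- The ratio sequence `e_{k+1}/e_k` (with junk value `0` out of range). -/
noncomputable def Rz (s : Multiset ℝ) (k : ℤ) : ℝ := eZ s (k + 1) / eZ s k

lemma Rz_nonneg {s : Multiset ℝ} (h : ∀ x ∈ s, 0 < x) (k : ℤ) : 0 ≤ Rz s k :=
  div_nonneg (eZ_nonneg (fun x hx => (h x hx).le) _) (eZ_nonneg (fun x hx => (h x hx).le) _)

/-- Main induction: the ratio sequence is positive in range, zero out of range,
strictly decreasing, and strictly convex. -/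
lemma ratseq : ∀ s : Multiset ℝ, (∀ x ∈ s, 0 < x) →
    (∀ k : ℤ, 0 ≤ k → k < (Multiset.card s : ℤ) → 0 < Rz s k) ∧
    (∀ k : ℤ, (Multiset.card s : ℤ) ≤ k → Rz s k = 0) ∧
    (∀ k : ℤ, 0 ≤ k → k < (Multiset.card s : ℤ) → Rz s (k + 1) < Rz s k) ∧
    (∀ k : ℤ, 1 ≤ k → k < (Multiset.card s : ℤ) → 2 * Rz s k < Rz s (k - 1) + Rz s (k + 1)) := by
  intro s
  induction s using Multiset.induction_on with
  | empty =>
    intro _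
    refine ⟨?_, ?_, ?_, ?_⟩
    · intro k h0 h1
      simp only [Multiset.card_zero, Nat.cast_zero] at h1
      omega
    · intro k hk
      simp only [Multiset.card_zero, Nat.cast_zero] at hk
      unfold Rz
      rw [eZ_empty, if_neg (by omega)]
      simp
    · intro k h0 h1
      simp only [Multiset.card_zero, Nat.cast_zero] at h1
      omega
    · intro k h0 h1
      simp only [Multiset.card_zero, Nat.cast_zero] at h1
      omega
  | cons y u ih =>
    intro hs
    have hy : 0 < y := hs y (Multiset.mem_cons_self y u)
    have hu : ∀ x ∈ u, 0 < x := fun x hx => hs x (Multiset.mem_cons_of_mem hx)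
    obtain ⟨P, Z, D, C⟩ := ih hu
    have hRnn : ∀ k : ℤ, 0 ≤ Rz u k := Rz_nonneg hu
    have hEpos : ∀ k : ℤ, 0 ≤ k → k ≤ (Multiset.card u : ℤ) → 0 < eZ u k :=
      fun k h1 h2 => eZ_pos hu h1 h2
    -- value at 0
    have hR0 : Rz (y ::ₘ u) 0 = Rz u 0 + y := by
      unfold Rz
      rw [eZ_cons, eZ_cons, eZ_zero, eZ_neg _ (by omega : (0:ℤ) - 1 < 0)]
      rw [show (0:ℤ) + 1 - 1 = 0 by ring, eZ_zero]
      norm_num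
    -- the transformation formula
    have hRform : ∀ t : ℤ, 1 ≤ t → t ≤ (Multiset.card u : ℤ) →
        Rz (y ::ₘ u) t = Rz u (t - 1) * (Rz u t + y) / (Rz u (t - 1) + y) := by
      intro t h1 h2
      have hb : 0 < eZ u (t - 1) := hEpos _ (by omega) (by omega)
      have hc : 0 < eZ u t := hEpos _ (by omega) h2
      have hden : 0 < eZ u t + y * eZ u (t - 1) := by positivity
      have hden2 : 0 < eZ u t / eZ u (t - 1) + y := by positivity
      unfold Rz
      rw [eZ_cons, eZ_cons, show t + 1 - 1 = t by ring, show t - 1 + 1 = t by ring]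
      field_simp
    -- zero beyond range
    have hRtop : ∀ t : ℤ, (Multiset.card u : ℤ) < t → Rz (y ::ₘ u) t = 0 := by
      intro t ht
      unfold Rz
      rw [eZ_cons, show t + 1 - 1 = t by ring, eZ_eq_zero (by omega), eZ_eq_zero (by omega)]
      simp
    set N : ℤ := (Multiset.card u : ℤ) with hN
    have hN0 : 0 ≤ N := by positivity
    -- positivity
    have Hpos : ∀ k : ℤ, 0 ≤ k → k < N + 1 → 0 < Rz (y ::ₘ u) k := by
      intro k h0 hk
      by_cases hk0 : k = 0
      · subst hk0
        rw [hR0]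
        have := hRnn 0
        linarith
      · rw [hRform k (by omega) (by omega)]
        have hB : 0 < Rz u (k - 1) := P (k - 1) (by omega) (by omega)
        have hC : 0 ≤ Rz u k := hRnn k
        exact div_pos (mul_pos hB (by linarith)) (by linarith)
    -- zero
    have Hzero : ∀ k : ℤ, N + 1 ≤ k → Rz (y ::ₘ u) k = 0 := by
      intro k hk
      exact hRtop k (by omega)
    -- decreasing
    have Hdec : ∀ k : ℤ, 0 ≤ k → k < N + 1 → Rz (y ::ₘ u) (k + 1) < Rz (y ::ₘ u) k := by
      intro k h0 hk
      rcases eq_or_lt_of_le (show k ≤ N by omega) with hkN | hkN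
      · -- k = N : RHS positive, LHS zero
        rw [hRtop (k + 1) (by omega)]
        exact Hpos k h0 hk
      · -- k < N
        by_cases hk0 : k = 0
        · subst hk0
          rw [show (0:ℤ) + 1 = 1 by norm_num, hR0, hRform 1 le_rfl (by omega)]
          have hb : 0 < Rz u 0 := P 0 le_rfl (by omega)
          have hcb : Rz u (0 + 1) < Rz u 0 := D 0 le_rfl (by omega)
          rw [show (1:ℤ) - 1 = 0 by ring] at *
          have hc : 0 ≤ Rz u 1 := hRnn 1
          rw [div_lt_iff₀ (by linarith)]
          have h1 : Rz u 0 * Rz u 1 < Rz u 0 * Rz u 0 := by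
            have : Rz u (0 + 1) = Rz u 1 := by norm_num
            rw [this] at hcb
            exact mul_lt_mul_of_pos_left hcb hb
          nlinarith [mul_pos hb hy, sq_nonneg y]
        · -- 1 ≤ k ≤ N - 1
          rw [hRform k (by omega) (by omega), hRform (k + 1) (by omega) (by omega)]
          rw [show k + 1 - 1 = k by ring]
          have hB : 0 < Rz u (k - 1) := P (k - 1) (by omega) (by omega)
          have hC : 0 < Rz u k := P k (by omega) (by omega)
          have hD : 0 ≤ Rz u (k + 1) := hRnn (k + 1)
          have hBC : Rz u k < Rz u (k - 1) := by
            have := D (k - 1) (by omega) (by omega)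
            rw [show k - 1 + 1 = k by ring] at this
            exact this
          have hCD : Rz u (k + 1) < Rz u k := D k (by omega) (by omega)
          set B := Rz u (k - 1)
          set C0 := Rz u k
          set D0 := Rz u (k + 1)
          rw [div_lt_div_iff₀ (by linarith) (by linarith)]
          have id1 : B * (C0 + y) * (C0 + y) - C0 * (D0 + y) * (B + y)
              = B * C0 * (C0 - D0) + y * C0 * (B - D0) + y ^ 2 * (B - C0) := by ring
          have t1 : 0 < B * C0 * (C0 - D0) := mul_pos (mul_pos hB hC) (by linarith)
          have t2 : 0 < y * C0 * (B - D0) := mul_pos (mul_pos hy hC) (by linarith)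
          have t3 : 0 < y ^ 2 * (B - C0) := mul_pos (by positivity) (by linarith)
          linarith [id1, t1, t2, t3]
    -- convexity
    have Hconv : ∀ k : ℤ, 1 ≤ k → k < N + 1 →
        2 * Rz (y ::ₘ u) k < Rz (y ::ₘ u) (k - 1) + Rz (y ::ₘ u) (k + 1) := by
      intro k h1 hk
      by_cases hk1 : k = 1
      · subst hk1
        rw [show (1:ℤ) + 1 = 2 by norm_num, show (1:ℤ) - 1 = 0 by ring, hR0]
        by_cases hN1 : N = 1
        · -- two-element case
          rw [hRtop 2 (by omega), hRform 1 le_rfl (by omega)]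
          rw [show (1:ℤ) - 1 = 0 by ring]
          have hb : 0 < Rz u 0 := P 0 le_rfl (by omega)
          have hc0 : Rz u 1 = 0 := Z 1 (by omega)
          rw [hc0]
          set b := Rz u 0
          rw [show (2:ℝ) * (b * (0 + y) / (b + y)) = 2 * (b * y) / (b + y) by ring]
          rw [div_lt_iff₀ (by linarith)]
          nlinarith [mul_pos hb hb, sq_nonneg y, mul_pos hb hy]
        · -- N ≥ 2
          rw [hRform 1 le_rfl (by omega), hRform 2 (by omega) (by omega)]
          rw [show (1:ℤ) - 1 = 0 by ring, show (2:ℤ) - 1 = 1 by ring]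
          have hb : 0 < Rz u 0 := P 0 le_rfl (by omega)
          have hc : 0 < Rz u 1 := P 1 (by omega) (by omega)
          have hd : 0 ≤ Rz u 2 := hRnn 2
          have hbc : Rz u 1 < Rz u 0 := by
            have := D 0 le_rfl (by omega)
            rw [show (0:ℤ) + 1 = 1 by ring] at this
            exact this
          have hY : 2 * Rz u 1 < Rz u 0 + Rz u 2 := by
            have := C 1 le_rfl (by omega)
            rw [show (1:ℤ) - 1 = 0 by ring, show (1:ℤ) + 1 = 2 by ring] at this
            exact this
          set b := Rz u 0
          set c := Rz u 1
          set d := Rz u 2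
          have hby : (0:ℝ) < b + y := by linarith
          have hcy : (0:ℝ) < c + y := by linarith
          rw [← sub_pos]
          have key : b + y + c * (d + y) / (c + y) - 2 * (b * (c + y) / (b + y))
              = ((b + y) ^ 2 * (c + y) + c * (d + y) * (b + y) - 2 * b * (c + y) ^ 2)
                / ((b + y) * (c + y)) := by
            field_simp
          rw [key]
          apply div_pos _ (mul_pos hby hcy)
          have id1 : (b + y) ^ 2 * (c + y) + c * (d + y) * (b + y) - 2 * b * (c + y) ^ 2
              = b * c * (b + d - 2 * c) + y * (b * (b - c) + c * d) + 2 * c * y ^ 2 + y ^ 3 := by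
            ring
          have t0 : 0 ≤ b * c * (b + d - 2 * c) :=
            mul_nonneg (mul_nonneg hb.le hc.le) (by linarith)
          have t1 : 0 ≤ y * (b * (b - c) + c * d) := by
            apply mul_nonneg hy.le
            have : 0 ≤ b * (b - c) := mul_nonneg hb.le (by linarith)
            have : 0 ≤ c * d := mul_nonneg hc.le hd
            linarith [mul_nonneg hb.le (show (0:ℝ) ≤ b - c by linarith), mul_nonneg hc.le hd]
          have t2 : 0 ≤ 2 * c * y ^ 2 := by positivity
          have t3 : 0 < y ^ 3 := by positivity
          linarith [id1, t0, t1, t2, t3]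
      · -- 2 ≤ k
        have h2 : 2 ≤ k := by omega
        have hA : 0 < Rz u (k - 2) := P (k - 2) (by omega) (by omega)
        have hB : 0 < Rz u (k - 1) := P (k - 1) (by omega) (by omega)
        have hC : 0 ≤ Rz u k := hRnn k
        have hD : 0 ≤ Rz u (k + 1) := hRnn (k + 1)
        have hBC : Rz u k < Rz u (k - 1) := by
          have := D (k - 1) (by omega) (by omega)
          rw [show k - 1 + 1 = k by ring] at this
          exact this
        have hX : 2 * Rz u (k - 1) < Rz u (k - 2) + Rz u k := by
          have := C (k - 1) (by omega) (by omega)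
          rw [show k - 1 - 1 = k - 2 by ring, show k - 1 + 1 = k by ring] at this
          exact this
        have hY : 2 * Rz u k < Rz u (k - 1) + Rz u (k + 1) := by
          rcases lt_or_ge k N with hlt | hge
          · exact C k (by omega) hlt
          · have h0 : Rz u k = 0 := Z k (by omega)
            rw [h0]
            have h0' : Rz u (k + 1) = 0 := Z (k + 1) (by omega)
            linarith
        -- formulas
        have f1 : Rz (y ::ₘ u) (k - 1)
            = Rz u (k - 2) * (Rz u (k - 1) + y) / (Rz u (k - 2) + y) := by
          have := hRform (k - 1) (by omega) (by omega)
          rw [show k - 1 - 1 = k - 2 by ring] at this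
          exact this
        have f2 : Rz (y ::ₘ u) k = Rz u (k - 1) * (Rz u k + y) / (Rz u (k - 1) + y) :=
          hRform k (by omega) (by omega)
        have f3 : Rz (y ::ₘ u) (k + 1) = Rz u k * (Rz u (k + 1) + y) / (Rz u k + y) := by
          rcases lt_or_ge k N with hlt | hge
          · have := hRform (k + 1) (by omega) (by omega)
            rw [show k + 1 - 1 = k by ring] at this
            exact this
          · have h0 : Rz u k = 0 := Z k (by omega)
            rw [hRtop (k + 1) (by omega), h0]
            simp
        rw [f1, f2, f3]
        set A := Rz u (k - 2)
        set B := Rz u (k - 1)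
        set C0 := Rz u k
        set D0 := Rz u (k + 1)
        have hAy : (0:ℝ) < A + y := by linarith
        have hBy : (0:ℝ) < B + y := by linarith
        have hCy : (0:ℝ) < C0 + y := by linarith
        rw [← sub_pos]
        have key : A * (B + y) / (A + y) + C0 * (D0 + y) / (C0 + y)
              - 2 * (B * (C0 + y) / (B + y))
            = (A * (B + y) ^ 2 * (C0 + y) + C0 * (D0 + y) * (A + y) * (B + y)
                - 2 * B * (C0 + y) ^ 2 * (A + y)) / ((A + y) * (B + y) * (C0 + y)) := by
          field_simp
        rw [key]
        apply div_pos _ (mul_pos (mul_pos hAy hBy) hCy)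
        have id1 : A * (B + y) ^ 2 * (C0 + y) + C0 * (D0 + y) * (A + y) * (B + y)
              - 2 * B * (C0 + y) ^ 2 * (A + y)
            = A * B * C0 * (B + D0 - 2 * C0)
              + y * (2 * (B - C0) ^ 3 + ((B - C0) ^ 2 + C0 ^ 2) * (A + C0 - 2 * B)
                + C0 * (3 * B - C0) * (B + D0 - 2 * C0)
                + C0 * (A + C0 - 2 * B) * (B + D0 - 2 * C0))
              + y ^ 2 * C0 * (2 * (A + C0 - 2 * B) + (B + D0 - 2 * C0))
              + y ^ 3 * (A + C0 - 2 * B) := by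
          ring
        have hXpos : 0 < A + C0 - 2 * B := by linarith
        have hYpos : 0 < B + D0 - 2 * C0 := by linarith
        have t0 : 0 ≤ A * B * C0 * (B + D0 - 2 * C0) :=
          mul_nonneg (mul_nonneg (mul_nonneg hA.le hB.le) hC) hYpos.le
        have t1 : 0 ≤ y * (2 * (B - C0) ^ 3 + ((B - C0) ^ 2 + C0 ^ 2) * (A + C0 - 2 * B)
            + C0 * (3 * B - C0) * (B + D0 - 2 * C0)
            + C0 * (A + C0 - 2 * B) * (B + D0 - 2 * C0)) := by
          apply mul_nonneg hy.le
          have s1 : 0 ≤ 2 * (B - C0) ^ 3 := by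
            have : 0 ≤ B - C0 := by linarith
            positivity
          have s2 : 0 ≤ ((B - C0) ^ 2 + C0 ^ 2) * (A + C0 - 2 * B) :=
            mul_nonneg (by positivity) hXpos.le
          have s3 : 0 ≤ C0 * (3 * B - C0) * (B + D0 - 2 * C0) :=
            mul_nonneg (mul_nonneg hC (by linarith)) hYpos.le
          have s4 : 0 ≤ C0 * (A + C0 - 2 * B) * (B + D0 - 2 * C0) :=
            mul_nonneg (mul_nonneg hC hXpos.le) hYpos.le
          linarith
        have t2 : 0 ≤ y ^ 2 * C0 * (2 * (A + C0 - 2 * B) + (B + D0 - 2 * C0)) :=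
          mul_nonneg (mul_nonneg (by positivity) hC) (by linarith)
        have t3 : 0 < y ^ 3 * (A + C0 - 2 * B) := mul_pos (by positivity) hXpos
        linarith [id1, t0, t1, t2, t3]
    have hcard : (Multiset.card (y ::ₘ u) : ℤ) = N + 1 := by
      rw [hN]
      simp [Multiset.card_cons]
    rw [hcard]
    exact ⟨Hpos, Hzero, Hdec, Hconv⟩

lemma esymm_eq_eZ {n : ℕ} (x : Fin n → ℝ) (k : ℕ) :
    esymm x k = eZ (Multiset.map x Finset.univ.val) (k : ℤ) := by
  unfold eZ
  rw [if_pos (by positivity : (0:ℤ) ≤ (k:ℤ)), Int.toNat_natCast]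
  unfold esymm
  exact (Finset.esymm_map_val x Finset.univ k).symm

/-- Let `L_1, ..., L_Λ` be positive integers with `Λ ≥ 2`. The sequence
`t ↦ e_{t+1}(L)/e_t(L)` for `t ∈ {0,...,Λ-1}`, extended by the value `0` at `t = Λ`
(note `e_{Λ+1}(L)/e_Λ(L) = 0`), is strictly decreasing and strictly convex in `t`. -/
theorem stmt5 (Λ : ℕ) (hΛ : 2 ≤ Λ) (L : Fin Λ → ℕ) (hL : ∀ i, 1 ≤ L i) :
    (∀ t, t + 1 ≤ Λ →
      esymm (fun i => (L i : ℝ)) (t + 2) / esymm (fun i => (L i : ℝ)) (t + 1) <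
        esymm (fun i => (L i : ℝ)) (t + 1) / esymm (fun i => (L i : ℝ)) t) ∧
    (∀ t, 1 ≤ t → t ≤ Λ - 1 →
      2 * (esymm (fun i => (L i : ℝ)) (t + 1) / esymm (fun i => (L i : ℝ)) t) <
        esymm (fun i => (L i : ℝ)) t / esymm (fun i => (L i : ℝ)) (t - 1) +
          esymm (fun i => (L i : ℝ)) (t + 2) / esymm (fun i => (L i : ℝ)) (t + 1)) := by
  have hs : ∀ r ∈ Multiset.map (fun i => (L i : ℝ)) Finset.univ.val, 0 < r := by
    intro r hr
    rw [Multiset.mem_map] at hr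
    obtain ⟨i, _, rfl⟩ := hr
    have := hL i
    have h1 : (1:ℝ) ≤ (L i : ℝ) := by exact_mod_cast this
    linarith
  obtain ⟨P, Z, D, C⟩ := ratseq (Multiset.map (fun i => (L i : ℝ)) Finset.univ.val) hs
  have hcard : (Multiset.card (Multiset.map (fun i => (L i : ℝ)) Finset.univ.val) : ℤ)
      = (Λ : ℤ) := by
    simp
  constructor
  · intro t ht
    have hD := D (t : ℤ) (by positivity) (by rw [hcard]; exact_mod_cast (by omega : t < Λ))
    unfold Rz at hD
    rw [show (t:ℤ) + 1 + 1 = (t:ℤ) + 2 by ring] at hD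
    simp only [esymm_eq_eZ]
    push_cast
    exact hD
  · intro t h1 h2
    have hC := C (t : ℤ) (by exact_mod_cast h1)
      (by rw [hcard]; exact_mod_cast (by omega : t < Λ))
    unfold Rz at hC
    rw [show (t:ℤ) - 1 + 1 = (t:ℤ) by ring, show (t:ℤ) + 1 + 1 = (t:ℤ) + 2 by ring] at hC
    simp only [esymm_eq_eZ]
    rw [show ((t - 1 : ℕ) : ℤ) = (t:ℤ) - 1 by omega]
    push_cast
    exact hC
end

section
/- Let Λ ≥ 1, t ∈ {0, ..., Λ−1}, and let L_1, ..., L_Λ and L̄_1, ..., L̄_Λ be positive reals. Then Σ over (t+1)-subsets τ of [Λ] of max_{λ∈τ} ( L_λ · Π_{i∈τ\{λ}} L̄_i ) = max over injective maps σ: {1,...,Λ−t} → [Λ] of Σ_{λ=1}^{Λ−t} L_{σ(λ)} · Σ over t-subsets q of [Λ]\{σ(1),...,σ(λ)} of Π_{i∈q} L̄_i. -/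
open Finset

section Aux

variable {m : ℕ}

lemma mySup_eq_sup' [Nonempty (Fin m)] {s : Finset (Fin m)} (hs : s.Nonempty)
    (f : Fin m → ℝ) (hf : 0 ≤ s.sup' hs f) :
    (⨆ l ∈ s, f l) = s.sup' hs f := by
  apply le_antisymm
  · refine ciSup_le fun l => ?_
    by_cases h : l ∈ s
    · rw [ciSup_pos h]; exact Finset.le_sup' f h
    · haveI : IsEmpty (l ∈ s) := ⟨h⟩
      rw [Real.iSup_of_isEmpty]; exact hf
  · refine Finset.sup'_le _ _ fun l hl => ?_
    have h1 : f l = ⨆ (_ : l ∈ s), f l := (ciSup_pos (f := fun _ => f l) hl).symm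
    rw [h1]
    exact le_ciSup (f := fun l => ⨆ (_ : l ∈ s), f l) (Set.Finite.bddAbove (Set.finite_range _)) l

end Aux


section Aux

variable {m n : ℕ}

noncomputable def myPick [NeZero n] (σ : Fin n → Fin m) (τ : Finset (Fin m)) : Fin n :=
  if h : ((Finset.univ : Finset (Fin n)).filter fun k => σ k ∈ τ).Nonempty
  then ((Finset.univ : Finset (Fin n)).filter fun k => σ k ∈ τ).min' h else 0

lemma myPick_mem [NeZero n] {σ : Fin n → Fin m} {τ : Finset (Fin m)}
    (h : ((Finset.univ : Finset (Fin n)).filter fun k => σ k ∈ τ).Nonempty) :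
    σ (myPick σ τ) ∈ τ := by
  rw [myPick, dif_pos h]
  have := Finset.min'_mem _ h
  simpa using this

lemma myPick_le [NeZero n] {σ : Fin n → Fin m} {τ : Finset (Fin m)} {k : Fin n}
    (hk : σ k ∈ τ) : myPick σ τ ≤ k := by
  have h : ((Finset.univ : Finset (Fin n)).filter fun k => σ k ∈ τ).Nonempty :=
    ⟨k, by simpa using hk⟩
  rw [myPick, dif_pos h]
  exact Finset.min'_le _ _ (by simpa using hk)

lemma le_myPick [NeZero n] {σ : Fin n → Fin m} {τ : Finset (Fin m)} {l : Fin n}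
    (h : ((Finset.univ : Finset (Fin n)).filter fun k => σ k ∈ τ).Nonempty)
    (H : ∀ k, σ k ∈ τ → l ≤ k) : l ≤ myPick σ τ := by
  rw [myPick, dif_pos h]
  exact Finset.le_min' _ _ _ (fun k hk => H k (by simpa using hk))

lemma myFilter_nonempty [NeZero n] {t : ℕ} (hnt : n + t = m) {σ : Fin n → Fin m}
    (hσ : Function.Injective σ) {τ : Finset (Fin m)}
    (hτ : τ ∈ (Finset.univ : Finset (Fin m)).powersetCard (t + 1)) :
    ((Finset.univ : Finset (Fin n)).filter fun k => σ k ∈ τ).Nonempty := by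
  rw [Finset.mem_powersetCard] at hτ
  by_contra hne
  rw [Finset.not_nonempty_iff_eq_empty, Finset.filter_eq_empty_iff] at hne
  have hsub : τ ⊆ (Finset.univ : Finset (Fin m)) \ (Finset.univ : Finset (Fin n)).image σ := by
    intro x hx
    rw [Finset.mem_sdiff]
    refine ⟨Finset.mem_univ x, fun hmem => ?_⟩
    obtain ⟨k, _, hk⟩ := Finset.mem_image.mp hmem
    exact hne (Finset.mem_univ k) (hk ▸ hx)
  have hcard := Finset.card_le_card hsub
  rw [Finset.card_sdiff_of_subset (Finset.subset_univ _), Finset.card_image_of_injective _ hσ,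
    Finset.card_univ, Finset.card_univ, Fintype.card_fin, Fintype.card_fin, hτ.2] at hcard
  omega

end Aux
section Key

variable {m n t : ℕ}

lemma myKey [NeZero n] (hnt : n + t = m) (L Lb : Fin m → ℝ)
    {σ : Fin n → Fin m} (hσ : Function.Injective σ) :
    (∑ l : Fin n, L (σ l) *
        ∑ q ∈ ((Finset.univ : Finset (Fin m)) \
            ((Finset.univ.filter (fun k : Fin n => k ≤ l)).image σ)).powersetCard t,
          ∏ i ∈ q, Lb i)
      = ∑ τ ∈ (Finset.univ : Finset (Fin m)).powersetCard (t + 1),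
          L (σ (myPick σ τ)) * ∏ i ∈ τ.erase (σ (myPick σ τ)), Lb i := by
  simp_rw [Finset.mul_sum]
  rw [Finset.sum_sigma' Finset.univ
    (fun l => ((Finset.univ : Finset (Fin m)) \
      ((Finset.univ.filter (fun k : Fin n => k ≤ l)).image σ)).powersetCard t)
    (fun l q => L (σ l) * ∏ i ∈ q, Lb i)]
  refine Finset.sum_nbij' (fun p => insert (σ p.1) p.2)
    (fun τ => ⟨myPick σ τ, τ.erase (σ (myPick σ τ))⟩) ?_ ?_ ?_ ?_ ?_
  · rintro ⟨l, q⟩ hp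
    rw [Finset.mem_sigma, Finset.mem_powersetCard] at hp
    obtain ⟨-, hq, hqc⟩ := hp
    have hnotin : σ l ∉ q := by
      intro hmem
      have := hq hmem
      rw [Finset.mem_sdiff] at this
      exact this.2 (Finset.mem_image.mpr ⟨l, by simp, rfl⟩)
    rw [Finset.mem_powersetCard]
    exact ⟨Finset.subset_univ _, by rw [Finset.card_insert_of_notMem hnotin, hqc]⟩
  · intro τ hτ
    have hne := myFilter_nonempty hnt hσ hτ
    have hmem := myPick_mem hne
    rw [Finset.mem_powersetCard] at hτ
    rw [Finset.mem_sigma, Finset.mem_powersetCard]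
    refine ⟨Finset.mem_univ _, ?_, ?_⟩
    · intro x hx
      rw [Finset.mem_erase] at hx
      rw [Finset.mem_sdiff]
      refine ⟨Finset.mem_univ _, fun hc => ?_⟩
      obtain ⟨k, hk1, hk2⟩ := Finset.mem_image.mp hc
      rw [Finset.mem_filter] at hk1
      have hkτ : σ k ∈ τ := hk2 ▸ hx.2
      have := myPick_le hkτ
      have hkeq : k = myPick σ τ := le_antisymm hk1.2 this
      exact hx.1 (by rw [← hk2, hkeq])
    · rw [Finset.card_erase_of_mem hmem, hτ.2]; omega
  · rintro ⟨l, q⟩ hp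
    rw [Finset.mem_sigma, Finset.mem_powersetCard] at hp
    obtain ⟨-, hq, hqc⟩ := hp
    have hnotin : σ l ∉ q := by
      intro hmem
      have := hq hmem
      rw [Finset.mem_sdiff] at this
      exact this.2 (Finset.mem_image.mpr ⟨l, by simp, rfl⟩)
    have hpick : myPick σ (insert (σ l) q) = l := by
      refine le_antisymm (myPick_le (Finset.mem_insert_self _ _)) ?_
      refine le_myPick ⟨l, by simp⟩ fun k hk => ?_
      rcases Finset.mem_insert.mp hk with h | h
      · exact (hσ h).symm.le
      · by_contra hlt
        push_neg at hlt
        have := hq h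
        rw [Finset.mem_sdiff] at this
        exact this.2 (Finset.mem_image.mpr ⟨k, by simp [hlt.le], rfl⟩)
    simp only [hpick]
    rw [Finset.erase_insert hnotin]
  · intro τ hτ
    have hne := myFilter_nonempty hnt hσ hτ
    exact Finset.insert_erase (myPick_mem hne)
  · rintro ⟨l, q⟩ hp
    rw [Finset.mem_sigma, Finset.mem_powersetCard] at hp
    obtain ⟨-, hq, hqc⟩ := hp
    have hnotin : σ l ∉ q := by
      intro hmem
      have := hq hmem
      rw [Finset.mem_sdiff] at this
      exact this.2 (Finset.mem_image.mpr ⟨l, by simp, rfl⟩)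
    have hpick : myPick σ (insert (σ l) q) = l := by
      refine le_antisymm (myPick_le (Finset.mem_insert_self _ _)) ?_
      refine le_myPick ⟨l, by simp⟩ fun k hk => ?_
      rcases Finset.mem_insert.mp hk with h | h
      · exact (hσ h).symm.le
      · by_contra hlt
        push_neg at hlt
        have := hq h
        rw [Finset.mem_sdiff] at this
        exact this.2 (Finset.mem_image.mpr ⟨k, by simp [hlt.le], rfl⟩)
    simp only [hpick]
    rw [Finset.erase_insert hnotin]

end Key

/-- Let `Λ ≥ 1`, `t ∈ {0,...,Λ−1}`, and let `L, L̄` be positive reals indexed by `[Λ]`.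
Then `Σ over (t+1)-subsets τ of [Λ] of max_{λ∈τ} (L_λ · Π_{i∈τ\{λ}} L̄_i)` equals the
maximum over injective maps `σ : {1,...,Λ−t} → [Λ]` of
`Σ_{λ=1}^{Λ−t} L_{σ(λ)} · Σ over t-subsets q of [Λ]\{σ(1),...,σ(λ)} of Π_{i∈q} L̄_i`. -/
theorem stmt14 (Λ t : ℕ) (hΛ : 1 ≤ Λ) (ht : t ≤ Λ - 1)
    (L Lb : Fin Λ → ℝ) (hL : ∀ i, 0 < L i) (hLb : ∀ i, 0 < Lb i) :
    ∑ τ ∈ (Finset.univ : Finset (Fin Λ)).powersetCard (t + 1),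
        (⨆ l ∈ τ, L l * ∏ i ∈ τ.erase l, Lb i) =
      ⨆ σ : {σ : Fin (Λ - t) → Fin Λ // Function.Injective σ},
        ∑ l : Fin (Λ - t), L (σ.1 l) *
          ∑ q ∈ ((Finset.univ : Finset (Fin Λ)) \
              ((Finset.univ.filter (fun k : Fin (Λ - t) => k ≤ l)).image σ.1)).powersetCard t,
            ∏ i ∈ q, Lb i := by
  have htΛ : t < Λ := by omega
  set n := Λ - t with hndef
  have hnt : n + t = Λ := by omega
  haveI : NeZero n := ⟨by omega⟩
  haveI : Nonempty (Fin Λ) := ⟨⟨0, hΛ⟩⟩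
  have hnΛ : n ≤ Λ := by omega
  set r : Fin Λ → ℝ := fun i => L i / Lb i with hrdef
  set e : Equiv.Perm (Fin Λ) := Tuple.sort (fun i => -r i) with hedef
  have hmono : Monotone ((fun i => -r i) ∘ (e : Fin Λ → Fin Λ)) := Tuple.monotone_sort _
  have hanti : ∀ j k : Fin Λ, j ≤ k → r (e k) ≤ r (e j) := by
    intro j k h
    have := hmono h
    simp only [Function.comp_apply, neg_le_neg_iff] at this
    exact this
  set σ0 : Fin n → Fin Λ := fun l => e (Fin.castLE hnΛ l) with hσ0def
  have hσ0 : Function.Injective σ0 := by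
    intro a b hab
    exact Fin.castLE_injective hnΛ (e.injective hab)
  have hprod_pos : ∀ τ : Finset (Fin Λ), 0 < ∏ i ∈ τ, Lb i :=
    fun τ => Finset.prod_pos fun i _ => hLb i
  have hratio : ∀ (τ : Finset (Fin Λ)) (a : Fin Λ), a ∈ τ →
      L a * ∏ i ∈ τ.erase a, Lb i = r a * ∏ i ∈ τ, Lb i := by
    intro τ a ha
    rw [← Finset.mul_prod_erase τ Lb ha, hrdef]
    have hb := (hLb a).ne'
    field_simp
  have hfnonneg : ∀ (τ : Finset (Fin Λ)) (a : Fin Λ), 0 ≤ L a * ∏ i ∈ τ.erase a, Lb i :=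
    fun τ a => (mul_pos (hL a) (Finset.prod_pos fun i _ => hLb i)).le
  have hbest : ∀ τ ∈ (Finset.univ : Finset (Fin Λ)).powersetCard (t + 1), ∀ a ∈ τ,
      L a * ∏ i ∈ τ.erase a, Lb i ≤
        L (σ0 (myPick σ0 τ)) * ∏ i ∈ τ.erase (σ0 (myPick σ0 τ)), Lb i := by
    intro τ hτ a ha
    have hne := myFilter_nonempty hnt hσ0 hτ
    have hmemp := myPick_mem hne
    rw [hratio τ a ha, hratio τ _ hmemp]
    refine mul_le_mul_of_nonneg_right ?_ (hprod_pos τ).le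
    set l0 := myPick σ0 τ with hl0
    set j := e.symm a with hjdef
    have hea : e j = a := e.apply_symm_apply a
    have hcast : (Fin.castLE hnΛ l0 : Fin Λ) ≤ j := by
      by_cases hj : (j : ℕ) < n
      · have hk : σ0 ⟨(j : ℕ), hj⟩ ∈ τ := by
          show e (Fin.castLE hnΛ ⟨(j : ℕ), hj⟩) ∈ τ
          have hc : Fin.castLE hnΛ (⟨(j : ℕ), hj⟩ : Fin n) = j := by
            apply Fin.ext; rfl
          rw [hc, hea]; exact ha
        have hle := myPick_le hk
        rw [Fin.le_def] at hle ⊢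
        simpa using hle
      · rw [Fin.le_def]
        push_neg at hj
        have hlt : (l0 : ℕ) < n := l0.isLt
        simp only [Fin.coe_castLE]
        omega
    calc r a = r (e j) := by rw [hea]
      _ ≤ r (e (Fin.castLE hnΛ l0)) := hanti _ _ hcast
      _ = r (σ0 l0) := rfl
  have hsup_eq : ∀ τ ∈ (Finset.univ : Finset (Fin Λ)).powersetCard (t + 1),
      (⨆ l ∈ τ, L l * ∏ i ∈ τ.erase l, Lb i) =
        L (σ0 (myPick σ0 τ)) * ∏ i ∈ τ.erase (σ0 (myPick σ0 τ)), Lb i := by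
    intro τ hτ
    have hne := myFilter_nonempty hnt hσ0 hτ
    have hmemp := myPick_mem hne
    have hτne : τ.Nonempty := ⟨_, hmemp⟩
    have h0 : 0 ≤ τ.sup' hτne (fun l => L l * ∏ i ∈ τ.erase l, Lb i) :=
      le_trans (hfnonneg τ _) (Finset.le_sup' (fun l => L l * ∏ i ∈ τ.erase l, Lb i) hmemp)
    rw [mySup_eq_sup' hτne _ h0]
    exact le_antisymm (Finset.sup'_le _ _ (hbest τ hτ)) (Finset.le_sup' (fun l => L l * ∏ i ∈ τ.erase l, Lb i) hmemp)
  haveI : Nonempty {σ : Fin n → Fin Λ // Function.Injective σ} := ⟨⟨σ0, hσ0⟩⟩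
  refine le_antisymm ?_ (ciSup_le fun σp => ?_)
  · refine le_trans (le_of_eq ?_)
      (le_ciSup (f := fun σp : {σ : Fin n → Fin Λ // Function.Injective σ} =>
        ∑ l : Fin n, L (σp.1 l) *
          ∑ q ∈ ((Finset.univ : Finset (Fin Λ)) \
              ((Finset.univ.filter (fun k : Fin n => k ≤ l)).image σp.1)).powersetCard t,
            ∏ i ∈ q, Lb i)
        (Set.Finite.bddAbove (Set.finite_range _)) ⟨σ0, hσ0⟩)
    show _ = ∑ l : Fin n, L (σ0 l) *
          ∑ q ∈ ((Finset.univ : Finset (Fin Λ)) \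
              ((Finset.univ.filter (fun k : Fin n => k ≤ l)).image σ0)).powersetCard t,
            ∏ i ∈ q, Lb i
    rw [myKey hnt L Lb hσ0]
    exact Finset.sum_congr rfl hsup_eq
  · show ∑ l : Fin n, L (σp.1 l) *
          ∑ q ∈ ((Finset.univ : Finset (Fin Λ)) \
              ((Finset.univ.filter (fun k : Fin n => k ≤ l)).image σp.1)).powersetCard t,
            ∏ i ∈ q, Lb i ≤ _
    rw [myKey hnt L Lb σp.2]
    refine Finset.sum_le_sum fun τ hτ => ?_
    have hne := myFilter_nonempty hnt σp.2 hτ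
    have hmemp := myPick_mem hne
    have hτne : τ.Nonempty := ⟨_, hmemp⟩
    have h0 : 0 ≤ τ.sup' hτne (fun l => L l * ∏ i ∈ τ.erase l, Lb i) :=
      le_trans (hfnonneg τ _) (Finset.le_sup' (fun l => L l * ∏ i ∈ τ.erase l, Lb i) hmemp)
    rw [mySup_eq_sup' hτne _ h0]
    exact Finset.le_sup' (fun l => L l * ∏ i ∈ τ.erase l, Lb i) hmemp
end

section
/- Let Λ ≥ 1, t ∈ {0,...,Λ−1}, and let L, L̄ ∈ (ℝ_{>0})^Λ. Suppose the indices ℓ_1, ..., ℓ_Λ are ordered so that L_{ℓ_j}·L̄_{ℓ_{j+1}} ≥ L_{ℓ_{j+1}}·L̄_{ℓ_j} for all j. Then for each j ∈ {1, ..., Λ−t}, the index ℓ_j attains the maximum of λ ↦ L_λ·Π_{i∈τ\{λ}} L̄_i for every (t+1)-subset τ that contains ℓ_j and contains no ℓ_k with k < j; consequently the number of (t+1)-subsets on which ℓ_j is a maximizer is at least C(Λ−j, t), and Σ_{j=1}^{Λ−t} C(Λ−j, t) = C(Λ, t+1). -/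
open Finset
open scoped Classical

/-- Let `Λ ≥ 1`, `t ∈ {0,...,Λ−1}`, and `L, L̄ ∈ (ℝ_{>0})^Λ`. Suppose the indices
`ℓ_1, ..., ℓ_Λ` (a bijection `ℓ` of `[Λ]`) are ordered so that
`L_{ℓ_j}·L̄_{ℓ_k} ≥ L_{ℓ_k}·L̄_{ℓ_j}` for all `j ≤ k` (which follows from the adjacent
condition by transitivity). Then for each `j ∈ {1,...,Λ−t}` (0-based: `(j:ℕ) < Λ−t`):
(i) `ℓ_j` attains the maximum of `λ ↦ L_λ·Π_{i∈τ\{λ}} L̄_i` on every `(t+1)`-subset `τ`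
containing `ℓ_j` and no `ℓ_k` with `k < j`; (ii) consequently the number of
`(t+1)`-subsets on which `ℓ_j` is a maximizer is at least `C(Λ−j, t)`; and
(iii) `Σ_{j=1}^{Λ−t} C(Λ−j, t) = C(Λ, t+1)`. -/
theorem stmt15 (Λ t : ℕ) (hΛ : 1 ≤ Λ) (ht : t ≤ Λ - 1)
    (L Lb : Fin Λ → ℝ) (hL : ∀ i, 0 < L i) (hLb : ∀ i, 0 < Lb i)
    (ℓ : Fin Λ → Fin Λ) (hbij : Function.Bijective ℓ)
    (hsort : ∀ j k : Fin Λ, j ≤ k → L (ℓ k) * Lb (ℓ j) ≤ L (ℓ j) * Lb (ℓ k)) :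
    (∀ j : Fin Λ, (j : ℕ) < Λ - t →
      ∀ τ ∈ (Finset.univ : Finset (Fin Λ)).powersetCard (t + 1),
        ℓ j ∈ τ → (∀ k : Fin Λ, k < j → ℓ k ∉ τ) →
          ∀ μ ∈ τ, L μ * ∏ i ∈ τ.erase μ, Lb i ≤ L (ℓ j) * ∏ i ∈ τ.erase (ℓ j), Lb i) ∧
    (∀ j : Fin Λ, (j : ℕ) < Λ - t →
      (Λ - 1 - (j : ℕ)).choose t ≤
        (((Finset.univ : Finset (Fin Λ)).powersetCard (t + 1)).filter
          (fun τ => ℓ j ∈ τ ∧ ∀ μ ∈ τ,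
            L μ * ∏ i ∈ τ.erase μ, Lb i ≤ L (ℓ j) * ∏ i ∈ τ.erase (ℓ j), Lb i)).card) ∧
    (∑ j ∈ Finset.range (Λ - t), (Λ - 1 - j).choose t = Λ.choose (t + 1)) := by
  obtain ⟨hinj, hsurj⟩ := hbij
  have main : ∀ j : Fin Λ, (j : ℕ) < Λ - t →
      ∀ τ ∈ (Finset.univ : Finset (Fin Λ)).powersetCard (t + 1),
        ℓ j ∈ τ → (∀ k : Fin Λ, k < j → ℓ k ∉ τ) →
          ∀ μ ∈ τ, L μ * ∏ i ∈ τ.erase μ, Lb i ≤ L (ℓ j) * ∏ i ∈ τ.erase (ℓ j), Lb i := by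
    intro j hj τ hτ hjτ hno μ hμ
    obtain ⟨k, rfl⟩ := hsurj μ
    have hk : j ≤ k := le_of_not_gt fun h => hno k h hμ
    by_cases hkj : k = j
    · subst hkj; exact le_refl _
    · have hne : ℓ k ≠ ℓ j := fun h => hkj (hinj h)
      have h1 : L (ℓ k) * Lb (ℓ j) ≤ L (ℓ j) * Lb (ℓ k) := hsort j k hk
      have hjτ' : ℓ j ∈ τ.erase (ℓ k) := Finset.mem_erase.2 ⟨hne.symm, hjτ⟩
      have hkτ' : ℓ k ∈ τ.erase (ℓ j) := Finset.mem_erase.2 ⟨hne, hμ⟩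
      rw [← Finset.mul_prod_erase _ _ hjτ', ← Finset.mul_prod_erase _ _ hkτ',
        Finset.erase_right_comm]
      have hP : 0 ≤ ∏ i ∈ (τ.erase (ℓ j)).erase (ℓ k), Lb i :=
        le_of_lt (Finset.prod_pos fun i _ => hLb i)
      calc L (ℓ k) * (Lb (ℓ j) * ∏ i ∈ (τ.erase (ℓ j)).erase (ℓ k), Lb i)
          = (L (ℓ k) * Lb (ℓ j)) * ∏ i ∈ (τ.erase (ℓ j)).erase (ℓ k), Lb i := by ring
        _ ≤ (L (ℓ j) * Lb (ℓ k)) * ∏ i ∈ (τ.erase (ℓ j)).erase (ℓ k), Lb i :=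
            mul_le_mul_of_nonneg_right h1 hP
        _ = L (ℓ j) * (Lb (ℓ k) * ∏ i ∈ (τ.erase (ℓ j)).erase (ℓ k), Lb i) := by ring
  refine ⟨main, ?_, ?_⟩
  · intro j hj
    set A : Finset (Fin Λ) := (Finset.Ioi j).image ℓ with hA
    have hAcard : A.card = Λ - 1 - (j : ℕ) := by
      rw [hA, Finset.card_image_of_injective _ hinj, Fin.card_Ioi]
    have hjA : ℓ j ∉ A := by
      intro h
      obtain ⟨k, hk, hkj⟩ := Finset.mem_image.1 h
      exact absurd (hinj hkj) (ne_of_gt (Finset.mem_Ioi.1 hk))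
    have hcard : (A.powersetCard t).card = (Λ - 1 - (j : ℕ)).choose t := by
      rw [Finset.card_powersetCard, hAcard]
    rw [← hcard]
    apply Finset.card_le_card_of_injOn (fun S => insert (ℓ j) S)
    · intro S hS
      rw [Finset.mem_coe, Finset.mem_powersetCard] at hS
      obtain ⟨hSA, hScard⟩ := hS
      have hjS : ℓ j ∉ S := fun h => hjA (hSA h)
      have hτmem : insert (ℓ j) S ∈ (Finset.univ : Finset (Fin Λ)).powersetCard (t + 1) := by
        rw [Finset.mem_powersetCard]
        exact ⟨Finset.subset_univ _, by rw [Finset.card_insert_of_notMem hjS, hScard]⟩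
      rw [Finset.mem_coe, Finset.mem_filter]
      refine ⟨hτmem, Finset.mem_insert_self _ _, ?_⟩
      apply main j hj _ hτmem (Finset.mem_insert_self _ _)
      intro k hk hkmem
      rcases Finset.mem_insert.1 hkmem with h | h
      · exact absurd (hinj h) (ne_of_lt hk)
      · obtain ⟨k', hk', hkk'⟩ := Finset.mem_image.1 (hSA h)
        have hkk : k' = k := hinj hkk'
        subst hkk
        exact absurd (Finset.mem_Ioi.1 hk') (not_lt.2 hk.le)
    · intro S hS S' hS' heq
      rw [Finset.mem_coe, Finset.mem_powersetCard] at hS hS'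
      have h1 : ℓ j ∉ S := fun h => hjA (hS.1 h)
      have h2 : ℓ j ∉ S' := fun h => hjA (hS'.1 h)
      have := congrArg (Finset.erase · (ℓ j)) heq
      simpa [Finset.erase_insert h1, Finset.erase_insert h2] using this
  · have hb : ∀ j ∈ Finset.range (Λ - t), Λ - 1 - (Λ - t - 1 - j) = t + j := by
      intro j hj
      rw [Finset.mem_range] at hj
      omega
    rw [← Finset.sum_range_reflect]
    rw [Finset.sum_congr rfl fun j hj => by rw [hb j hj]]
    have : ∑ j ∈ Finset.range (Λ - t), (t + j).choose t
        = ∑ m ∈ Finset.Icc t (Λ - 1), m.choose t := by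
      apply Finset.sum_nbij' (fun j => t + j) (fun m => m - t)
      all_goals intro a ha
      · simp only [Finset.mem_range] at ha; rw [Finset.mem_Icc]; omega
      · simp only [Finset.mem_Icc] at ha; rw [Finset.mem_range]; omega
      · simp only [Finset.mem_range] at ha; omega
      · simp only [Finset.mem_Icc] at ha; omega
      · rfl
    rw [this, Nat.sum_Icc_choose]
    congr 1
    omega
end

section
/- Let Λ ≥ 2, p ∈ {1, ..., Λ−1}, and let L_1 ≥ L_2 ≥ ... ≥ L_Λ > 0. For τ ⊆ [Λ] with |τ| = j, define c̃(τ) := [Σ over (p+1)-subsets q of [Λ] of ((p+1−|q∩τ|)/(j+1−|q∩τ|))·Π_{i∈q}L_i] / [Σ over p-subsets ℓ of [Λ] of Π_{i∈ℓ}L_i]. Then: (i) if j ≥ p, the set τ = {1, 2, ..., j} minimizes c̃ over all subsets of cardinality j; (ii) if 1 ≤ j < p, the set τ = {Λ−j+1, ..., Λ} minimizes c̃ over all subsets of cardinality j; and (iii) if j = p, then c̃(τ) takes the same value for all τ of cardinality p. -/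
open Finset

/-- For `τ ⊆ [Λ]` with `|τ| = j`, the coefficient
`c̃(τ) := [Σ over (p+1)-subsets q of ((p+1−|q∩τ|)/(j+1−|q∩τ|))·Π_{i∈q}L_i] /
[Σ over p-subsets s of Π_{i∈s}L_i]`. -/
noncomputable def ctil {Λ : ℕ} (L : Fin Λ → ℝ) (p : ℕ) (τ : Finset (Fin Λ)) : ℝ :=
  (∑ q ∈ (Finset.univ : Finset (Fin Λ)).powersetCard (p + 1),
      (((p : ℝ) + 1 - ((q ∩ τ).card : ℝ)) / ((τ.card : ℝ) + 1 - ((q ∩ τ).card : ℝ))) *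
        ∏ i ∈ q, L i) /
    (∑ s ∈ (Finset.univ : Finset (Fin Λ)).powersetCard p, ∏ i ∈ s, L i)


lemma sum_pcard_insert {α : Type*} [DecidableEq α] {a : α} {s : Finset α} (ha : a ∉ s)
    (n : ℕ) (f : Finset α → ℝ) :
    ∑ q ∈ (insert a s).powersetCard (n + 1), f q
      = ∑ q ∈ s.powersetCard (n + 1), f q + ∑ q ∈ s.powersetCard n, f (insert a q) := by
  rw [powersetCard_succ_insert ha, sum_union, sum_image]
  · intro q hq q' hq' h
    rw [mem_coe, mem_powersetCard] at hq hq'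
    have haq : a ∉ q := fun h' => ha (hq.1 h')
    have haq' : a ∉ q' := fun h' => ha (hq'.1 h')
    rw [← erase_insert haq, ← erase_insert haq', h]
  · rw [disjoint_right]
    intro q hq hq'
    simp only [mem_image] at hq
    obtain ⟨r, hr, rfl⟩ := hq
    rw [mem_powersetCard] at hq'
    exact ha (hq'.1 (mem_insert_self a r))

noncomputable def Ssum {Λ : ℕ} (L : Fin Λ → ℝ) (w : ℕ → ℝ) (m : ℕ) (τ : Finset (Fin Λ)) : ℝ :=
  ∑ q ∈ (univ : Finset (Fin Λ)).powersetCard m, w (q ∩ τ).card * ∏ i ∈ q, L i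

lemma swap_le {Λ : ℕ} (L : Fin Λ → ℝ) (hpos : ∀ i, 0 < L i) (w : ℕ → ℝ) (p : ℕ) (hp : 1 ≤ p)
    (a b : Fin Λ) (τ : Finset (Fin Λ)) (ha : a ∈ τ) (hb : b ∉ τ)
    (hsign : ∀ k, k + 1 ≤ τ.card → k ≤ p → (w (k + 1) - w k) * (L b - L a) ≤ 0) :
    Ssum L w (p + 1) (insert b (τ.erase a)) ≤ Ssum L w (p + 1) τ := by
  obtain ⟨m, rfl⟩ : ∃ m, p = m + 1 := ⟨p - 1, by omega⟩
  have hab : a ≠ b := fun h => hb (h ▸ ha)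
  set τ' := insert b (τ.erase a) with hτ'
  set u := (univ : Finset (Fin Λ)) \ {a, b} with hu
  have hbu : b ∉ u := by simp [hu]
  have hau : a ∉ insert b u := by simp [hu, hab]
  have huniv : (univ : Finset (Fin Λ)) = insert a (insert b u) := by
    ext x; by_cases hxa : x = a <;> by_cases hxb : x = b <;> simp [hu, hxa, hxb]
  have hne : ∀ x ∈ u, x ≠ a ∧ x ≠ b := by
    intro x hx
    simp only [hu, mem_sdiff, mem_univ, true_and, mem_insert, mem_singleton] at hx
    tauto
  have haτ' : a ∉ τ' := by simp [hτ', hab]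
  have hbτ' : b ∈ τ' := mem_insert_self b _
  have hmem : ∀ x : Fin Λ, x ≠ a → x ≠ b → (x ∈ τ' ↔ x ∈ τ) := by
    intro x hxa hxb; simp [hτ', hxa, hxb]
  -- basic intersection facts for q ⊆ u
  have F1 : ∀ q : Finset (Fin Λ), q ⊆ u → q ∩ τ' = q ∩ τ := by
    intro q hq; ext x
    simp only [mem_inter]
    constructor <;> rintro ⟨h1, h2⟩ <;>
      exact ⟨h1, by
        have := hne x (hq h1)
        first
          | exact (hmem x this.1 this.2).mp h2
          | exact (hmem x this.1 this.2).mpr h2⟩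
  have cardτ : 1 ≤ τ.card := card_pos.mpr ⟨a, ha⟩
  -- decompose both sums
  have decomp : ∀ σ : Finset (Fin Λ),
      Ssum L w (m + 1 + 1) σ
        = (∑ q ∈ u.powersetCard (m + 1 + 1), w ((q ∩ σ).card) * ∏ i ∈ q, L i
            + ∑ q ∈ u.powersetCard (m + 1), w ((insert b q ∩ σ).card) * ∏ i ∈ insert b q, L i)
          + (∑ q ∈ u.powersetCard (m + 1), w ((insert a q ∩ σ).card) * ∏ i ∈ insert a q, L i
            + ∑ q ∈ u.powersetCard m,
                w ((insert a (insert b q) ∩ σ).card) * ∏ i ∈ insert a (insert b q), L i) := by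
    intro σ
    rw [Ssum, huniv, sum_pcard_insert hau, sum_pcard_insert hbu, sum_pcard_insert hbu]
  rw [decomp τ, decomp τ']
  have E1 : ∀ q ∈ u.powersetCard (m + 1 + 1),
      w ((q ∩ τ').card) * ∏ i ∈ q, L i = w ((q ∩ τ).card) * ∏ i ∈ q, L i := by
    intro q hq
    rw [F1 q (mem_powersetCard.mp hq).1]
  have E2 : ∀ q ∈ u.powersetCard m,
      w ((insert a (insert b q) ∩ τ').card) * ∏ i ∈ insert a (insert b q), L i
        = w ((insert a (insert b q) ∩ τ).card) * ∏ i ∈ insert a (insert b q), L i := by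
    intro q hq
    have hqu := (mem_powersetCard.mp hq).1
    have hbq : b ∉ q := fun h => (hne b (hqu h)).2 rfl
    have haq : a ∉ insert b q := by
      simp only [mem_insert]
      rintro (h | h)
      · exact hab h
      · exact (hne a (hqu h)).1 rfl
    rw [insert_inter_of_notMem haτ', insert_inter_of_mem ha,
        insert_inter_of_mem hbτ', insert_inter_of_notMem hb, F1 q hqu]
    rw [card_insert_of_notMem (fun h => haq (mem_insert_of_mem (mem_of_mem_inter_left h))),
        card_insert_of_notMem (fun h => hbq (mem_of_mem_inter_left h))]
  rw [sum_congr rfl E1, sum_congr rfl E2]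
  have key : ∑ q ∈ u.powersetCard (m + 1),
        (w ((insert b q ∩ τ').card) * ∏ i ∈ insert b q, L i
          + w ((insert a q ∩ τ').card) * ∏ i ∈ insert a q, L i)
      ≤ ∑ q ∈ u.powersetCard (m + 1),
        (w ((insert b q ∩ τ).card) * ∏ i ∈ insert b q, L i
          + w ((insert a q ∩ τ).card) * ∏ i ∈ insert a q, L i) := by
    apply sum_le_sum
    intro q hq
    obtain ⟨hqu, hqc⟩ := mem_powersetCard.mp hq
    have haq : a ∉ q := fun h => (hne a (hqu h)).1 rfl
    have hbq : b ∉ q := fun h => (hne b (hqu h)).2 rfl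
    have Pa : ∏ i ∈ insert a q, L i = L a * ∏ i ∈ q, L i := prod_insert haq
    have Pb : ∏ i ∈ insert b q, L i = L b * ∏ i ∈ q, L i := prod_insert hbq
    have Ca : (insert a q ∩ τ).card = (q ∩ τ).card + 1 := by
      rw [insert_inter_of_mem ha, card_insert_of_notMem (fun h => haq (mem_of_mem_inter_left h))]
    have Cb : (insert b q ∩ τ) = q ∩ τ := insert_inter_of_notMem hb
    have Ca' : (insert a q ∩ τ') = q ∩ τ := by
      rw [insert_inter_of_notMem haτ', F1 q hqu]
    have Cb' : (insert b q ∩ τ').card = (q ∩ τ).card + 1 := by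
      rw [insert_inter_of_mem hbτ', F1 q hqu,
        card_insert_of_notMem (fun h => hbq (mem_of_mem_inter_left h))]
    rw [Pa, Pb, Ca, Cb, Ca', Cb']
    set k := (q ∩ τ).card with hk
    have hk1 : k + 1 ≤ τ.card := by
      have : q ∩ τ ⊆ τ.erase a := by
        intro x hx
        exact mem_erase.mpr ⟨fun h => haq (h ▸ mem_of_mem_inter_left hx), mem_of_mem_inter_right hx⟩
      have := card_le_card this
      rw [card_erase_of_mem ha] at this
      omega
    have hk2 : k ≤ m + 1 := hqc ▸ card_le_card inter_subset_left
    have hP : (0:ℝ) < ∏ i ∈ q, L i := prod_pos fun i _ => hpos i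
    nlinarith [mul_nonpos_of_nonpos_of_nonneg (hsign k hk1 hk2)
        (sub_nonneg.mpr (le_refl (0:ℝ))), hsign k hk1 hk2,
      mul_nonneg (neg_nonneg.mpr (hsign k hk1 hk2)) hP.le]
  rw [sum_add_distrib, sum_add_distrib] at key
  linarith

lemma chain_le {Λ : ℕ} (L : Fin Λ → ℝ) (hpos : ∀ i, 0 < L i) (w : ℕ → ℝ) (p : ℕ) (hp : 1 ≤ p)
    (T : Finset (Fin Λ))
    (hT : ∀ a b : Fin Λ, a ∉ T → b ∈ T →
      ∀ k, k + 1 ≤ T.card → k ≤ p → (w (k + 1) - w k) * (L b - L a) ≤ 0) :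
    ∀ τ : Finset (Fin Λ), τ.card = T.card → Ssum L w (p + 1) T ≤ Ssum L w (p + 1) τ := by
  suffices H : ∀ n : ℕ, ∀ τ : Finset (Fin Λ), τ.card = T.card → (T \ τ).card ≤ n →
      Ssum L w (p + 1) T ≤ Ssum L w (p + 1) τ by
    exact fun τ h => H (T \ τ).card τ h le_rfl
  intro n
  induction n with
  | zero =>
    intro τ hc hle
    have : T \ τ = ∅ := card_eq_zero.mp (Nat.le_zero.mp hle)
    have hsub : T ⊆ τ := sdiff_eq_empty_iff_subset.mp this
    rw [eq_of_subset_of_card_le hsub (le_of_eq hc)]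
  | succ n ih =>
    intro τ hc hle
    by_cases hemp : T \ τ = ∅
    · have hsub : T ⊆ τ := sdiff_eq_empty_iff_subset.mp hemp
      rw [eq_of_subset_of_card_le hsub (le_of_eq hc)]
    · obtain ⟨b, hbmem⟩ := nonempty_iff_ne_empty.mpr hemp
      obtain ⟨hbT, hbτ⟩ := mem_sdiff.mp hbmem
      have hτT : (τ \ T).Nonempty := by
        rw [← card_pos, card_sdiff_comm hc, card_pos]
        exact ⟨b, hbmem⟩
      obtain ⟨a, hamem⟩ := hτT
      obtain ⟨haτ, haT⟩ := mem_sdiff.mp hamem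
      have hcτ : 1 ≤ τ.card := card_pos.mpr ⟨a, haτ⟩
      set τ'' := insert b (τ.erase a) with hτ''
      have hbe : b ∉ τ.erase a := fun h => hbτ (mem_of_mem_erase h)
      have hc'' : τ''.card = τ.card := by
        rw [hτ'', card_insert_of_notMem hbe, card_erase_of_mem haτ]; omega
      have hsd : T \ τ'' = (T \ τ).erase b := by
        ext x
        by_cases hxa : x = a
        · subst hxa; simp [haT]
        · simp only [mem_sdiff, hτ'', mem_insert, mem_erase, not_or, not_and, mem_sdiff, hxa]
          tauto
      have hcsd : (T \ τ'').card ≤ n := by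
        rw [hsd, card_erase_of_mem hbmem]
        have : 1 ≤ (T \ τ).card := card_pos.mpr ⟨b, hbmem⟩
        omega
      have h1 : Ssum L w (p + 1) T ≤ Ssum L w (p + 1) τ'' :=
        ih τ'' (hc''.trans hc) hcsd
      have h2 : Ssum L w (p + 1) τ'' ≤ Ssum L w (p + 1) τ := by
        apply swap_le L hpos w p hp a b τ haτ hbτ
        intro k hk1 hk2
        exact hT a b haT hbT k (by omega) hk2
      exact h1.trans h2

noncomputable def wfun (p j k : ℕ) : ℝ := ((p : ℝ) + 1 - (k : ℝ)) / ((j : ℝ) + 1 - (k : ℝ))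

lemma ctil_eq {Λ : ℕ} (L : Fin Λ → ℝ) (p : ℕ) (τ : Finset (Fin Λ)) :
    ctil L p τ = Ssum L (wfun p τ.card) (p + 1) τ /
      (∑ s ∈ (Finset.univ : Finset (Fin Λ)).powersetCard p, ∏ i ∈ s, L i) := rfl

lemma wstep {p j k : ℕ} (hk : k + 1 ≤ j) :
    wfun p j (k + 1) - wfun p j k = ((p : ℝ) - j) / (((j : ℝ) - k) * ((j : ℝ) + 1 - k)) := by
  have hk' : (k : ℝ) + 1 ≤ (j : ℝ) := by exact_mod_cast hk
  have hd1 : (0:ℝ) < (j : ℝ) - k := by linarith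
  have hd2 : (0:ℝ) < (j : ℝ) + 1 - k := by linarith
  rw [wfun, wfun]
  push_cast
  rw [div_sub_div _ _ (ne_of_gt (by linarith)) (ne_of_gt (by linarith)),
    div_eq_div_iff (mul_ne_zero (ne_of_gt (by linarith)) (ne_of_gt (by linarith)))
      (mul_ne_zero (ne_of_gt (by linarith)) (ne_of_gt (by linarith)))]
  ring

lemma card_filter_lt {Λ j : ℕ} (hj : j ≤ Λ) :
    ((univ : Finset (Fin Λ)).filter (fun i : Fin Λ => (i : ℕ) < j)).card = j := by
  have he : (univ : Finset (Fin Λ)).filter (fun i : Fin Λ => (i : ℕ) < j)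
      = (Finset.range j).attachFin (fun m hm => lt_of_lt_of_le (mem_range.mp hm) hj) := by
    ext i
    simp [Finset.mem_attachFin, mem_range]
  rw [he, card_attachFin, card_range]

lemma card_filter_ge {Λ j : ℕ} (hj : j ≤ Λ) :
    ((univ : Finset (Fin Λ)).filter (fun i : Fin Λ => Λ - j ≤ (i : ℕ))).card = j := by
  have h1 := Finset.card_filter_add_card_filter_not
    (s := (univ : Finset (Fin Λ))) (p := fun i : Fin Λ => Λ - j ≤ (i : ℕ))
  have h2 : ((univ : Finset (Fin Λ)).filter (fun i : Fin Λ => ¬ (Λ - j ≤ (i : ℕ)))).card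
      = Λ - j := by
    have : ((univ : Finset (Fin Λ)).filter (fun i : Fin Λ => ¬ (Λ - j ≤ (i : ℕ))))
        = ((univ : Finset (Fin Λ)).filter (fun i : Fin Λ => (i : ℕ) < Λ - j)) := by
      apply filter_congr; intro i _; exact not_le
    rw [this, card_filter_lt (by omega)]
  have h3 : (univ : Finset (Fin Λ)).card = Λ := by simp
  omega

/-- Let `Λ ≥ 2`, `p ∈ {1,...,Λ−1}`, and `L_1 ≥ L_2 ≥ ... ≥ L_Λ > 0`. Then:
(i) if `j ≥ p`, the set `τ = {1,...,j}` minimizes `c̃` among subsets of cardinality `j`;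
(ii) if `1 ≤ j < p`, the set `τ = {Λ−j+1,...,Λ}` minimizes `c̃` among subsets of
cardinality `j`; (iii) if `j = p`, `c̃(τ)` is the same for all `τ` of cardinality `p`. -/
theorem stmt16 (Λ p : ℕ) (hΛ : 2 ≤ Λ) (hp1 : 1 ≤ p) (hp2 : p ≤ Λ - 1)
    (L : Fin Λ → ℝ) (hpos : ∀ i, 0 < L i)
    (hsorted : ∀ i j : Fin Λ, i ≤ j → L j ≤ L i) :
    (∀ j : ℕ, p ≤ j → j ≤ Λ → ∀ τ : Finset (Fin Λ), τ.card = j →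
      ctil L p (Finset.univ.filter (fun i : Fin Λ => (i : ℕ) < j)) ≤ ctil L p τ) ∧
    (∀ j : ℕ, 1 ≤ j → j < p → ∀ τ : Finset (Fin Λ), τ.card = j →
      ctil L p (Finset.univ.filter (fun i : Fin Λ => Λ - j ≤ (i : ℕ))) ≤ ctil L p τ) ∧
    (∀ τ τ' : Finset (Fin Λ), τ.card = p → τ'.card = p → ctil L p τ = ctil L p τ') := by
  have hpΛ : p ≤ Λ := by omega
  have hD : (0:ℝ) < ∑ s ∈ (Finset.univ : Finset (Fin Λ)).powersetCard p, ∏ i ∈ s, L i := by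
    apply sum_pos
    · intro s _; exact prod_pos fun i _ => hpos i
    · apply powersetCard_nonempty.mpr
      simpa using hpΛ
  refine ⟨?_, ?_, ?_⟩
  · -- part (i): j ≥ p, T = top j (smallest indices = largest L)
    intro j hpj hjΛ τ hτ
    set T := (univ : Finset (Fin Λ)).filter (fun i : Fin Λ => (i : ℕ) < j) with hTdef
    have hTc : T.card = j := card_filter_lt hjΛ
    have hsign : ∀ a b : Fin Λ, a ∉ T → b ∈ T →
        ∀ k, k + 1 ≤ T.card → k ≤ p →
        (wfun p j (k + 1) - wfun p j k) * (L b - L a) ≤ 0 := by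
      intro a b haT hbT k hk1 hk2
      rw [hTc] at hk1
      simp only [hTdef, mem_filter, mem_univ, true_and, not_lt] at haT hbT
      have hba : b ≤ a := by
        rw [Fin.le_def]; omega
      have hL : L a ≤ L b := hsorted b a hba
      have hk' : (k : ℝ) + 1 ≤ (j : ℝ) := by exact_mod_cast hk1
      have hd1 : (0:ℝ) < (j : ℝ) - k := by linarith
      have hd2 : (0:ℝ) < (j : ℝ) + 1 - k := by linarith
      have hpj' : (p : ℝ) ≤ (j : ℝ) := by exact_mod_cast hpj
      rw [wstep hk1]
      apply mul_nonpos_of_nonpos_of_nonneg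
      · exact div_nonpos_of_nonpos_of_nonneg (by linarith) (by positivity)
      · linarith
    have hchain := chain_le L hpos (wfun p j) p hp1 T hsign τ (by rw [hτ, hTc])
    rw [ctil_eq, ctil_eq, hτ, hTc]
    exact (div_le_div_iff_of_pos_right hD).mpr hchain
  · -- part (ii): j < p, T = bottom j (largest indices = smallest L)
    intro j hj1 hjp τ hτ
    have hjΛ : j ≤ Λ := by omega
    set T := (univ : Finset (Fin Λ)).filter (fun i : Fin Λ => Λ - j ≤ (i : ℕ)) with hTdef
    have hTc : T.card = j := card_filter_ge hjΛ
    have hsign : ∀ a b : Fin Λ, a ∉ T → b ∈ T →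
        ∀ k, k + 1 ≤ T.card → k ≤ p →
        (wfun p j (k + 1) - wfun p j k) * (L b - L a) ≤ 0 := by
      intro a b haT hbT k hk1 hk2
      rw [hTc] at hk1
      simp only [hTdef, mem_filter, mem_univ, true_and, not_le] at haT hbT
      have hba : a ≤ b := by
        rw [Fin.le_def]; omega
      have hL : L b ≤ L a := hsorted a b hba
      have hk' : (k : ℝ) + 1 ≤ (j : ℝ) := by exact_mod_cast hk1
      have hd1 : (0:ℝ) < (j : ℝ) - k := by linarith
      have hd2 : (0:ℝ) < (j : ℝ) + 1 - k := by linarith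
      have hpj' : (j : ℝ) ≤ (p : ℝ) := by exact_mod_cast hjp.le
      rw [wstep hk1]
      apply mul_nonpos_of_nonneg_of_nonpos
      · exact div_nonneg (by linarith) (by positivity)
      · linarith
    have hchain := chain_le L hpos (wfun p j) p hp1 T hsign τ (by rw [hτ, hTc])
    rw [ctil_eq, ctil_eq, hτ, hTc]
    exact (div_le_div_iff_of_pos_right hD).mpr hchain
  · -- part (iii)
    intro τ τ' hτ hτ'
    have key : ∀ σ : Finset (Fin Λ), σ.card = p →
        ctil L p σ = (∑ q ∈ (Finset.univ : Finset (Fin Λ)).powersetCard (p + 1),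
          ∏ i ∈ q, L i) / (∑ s ∈ (Finset.univ : Finset (Fin Λ)).powersetCard p, ∏ i ∈ s, L i) := by
      intro σ hσ
      rw [ctil]
      congr 1
      apply sum_congr rfl
      intro q hq
      have hk : ((q ∩ σ).card : ℕ) ≤ p := hσ ▸ card_le_card inter_subset_right
      have hk' : ((q ∩ σ).card : ℝ) ≤ (p : ℝ) := by exact_mod_cast hk
      rw [hσ]
      rw [div_self (by linarith), one_mul]
    rw [key τ hτ, key τ' hτ']
end

section
/- Let L_1, ..., L_Λ be positive integers summing to K, with Λ ≥ 2 and t ∈ {1, ..., Λ−1}. Among all such vectors L with fixed sum K and all entries at least 1, the ratio e_{t+1}(L)/e_t(L) is maximized by the uniform vector L = (K/Λ, ..., K/Λ) (when Λ divides K), i.e., for any L with Σ L_λ = K, e_{t+1}(L)/e_t(L) ≤ e_{t+1}(u)/e_t(u) where u is the constant vector with entries K/Λ. -/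
open Finset

namespace Stmt19Aux

variable {n : ℕ}

/-- Elementary symmetric polynomial restricted to a subset `s`. -/
noncomputable def E (x : Fin n → ℝ) (s : Finset (Fin n)) (k : ℕ) : ℝ :=
  ∑ q ∈ s.powersetCard k, ∏ i ∈ q, x i

lemma E_nonneg {x : Fin n → ℝ} (hx : ∀ i, 0 ≤ x i) (s : Finset (Fin n)) (k : ℕ) :
    0 ≤ E x s k :=
  Finset.sum_nonneg fun _ _ => Finset.prod_nonneg fun i _ => hx i

lemma E_insert (x : Fin n → ℝ) {a : Fin n} {s : Finset (Fin n)} (ha : a ∉ s) (k : ℕ) :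
    E x (insert a s) (k + 1) = E x s (k + 1) + x a * E x s k := by
  have hdisj : Disjoint (s.powersetCard (k + 1)) ((s.powersetCard k).image (insert a)) := by
    rw [Finset.disjoint_left]
    rintro q hq hq'
    obtain ⟨q', hq', rfl⟩ := Finset.mem_image.1 hq'
    have : a ∈ s := (Finset.mem_powersetCard.1 hq).1 (Finset.mem_insert_self a q')
    exact ha this
  rw [E, powersetCard_succ_insert ha, Finset.sum_union hdisj]
  congr 1
  rw [Finset.sum_image, E, Finset.mul_sum]
  · refine Finset.sum_congr rfl fun q hq => ?_
    have haq : a ∉ q := fun h => ha ((Finset.mem_powersetCard.1 hq).1 h)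
    rw [Finset.prod_insert haq]
  · intro q hq q' hq' h
    have haq : a ∉ q := fun h' => ha ((Finset.mem_powersetCard.1 hq).1 h')
    have haq' : a ∉ q' := fun h' => ha ((Finset.mem_powersetCard.1 hq').1 h')
    have := congrArg (Finset.erase · a) h
    simpa [Finset.erase_insert haq, Finset.erase_insert haq'] using this

/-- Identity A: `∑ i, x i * e_t(L \ i) = (t+1) e_{t+1}(L)`. -/
lemma idA (x : Fin n → ℝ) (t : ℕ) :
    ∑ i, x i * E x (Finset.univ.erase i) t = (t + 1 : ℝ) * E x Finset.univ (t + 1) := by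
  have lhs : ∑ i, x i * E x (Finset.univ.erase i) t =
      ∑ p ∈ (Finset.univ : Finset (Fin n)).sigma
        (fun i => (Finset.univ.erase i).powersetCard t), x p.1 * ∏ j ∈ p.2, x j := by
    rw [Finset.sum_sigma]
    exact Finset.sum_congr rfl fun i _ => by rw [E, Finset.mul_sum]
  have rhs : (t + 1 : ℝ) * E x Finset.univ (t + 1) =
      ∑ p ∈ ((Finset.univ : Finset (Fin n)).powersetCard (t + 1)).sigma (fun q => q),
        x p.2 * ∏ j ∈ p.1.erase p.2, x j := by
    rw [Finset.sum_sigma, E, Finset.mul_sum]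
    refine Finset.sum_congr rfl fun q hq => ?_
    have hcard : q.card = t + 1 := (Finset.mem_powersetCard.1 hq).2
    have : ∀ i ∈ q, x i * ∏ j ∈ q.erase i, x j = ∏ j ∈ q, x j := fun i hi =>
      Finset.mul_prod_erase q x hi
    rw [Finset.sum_congr rfl this, Finset.sum_const, hcard, nsmul_eq_mul]
    push_cast
    ring
  rw [lhs, rhs]
  refine Finset.sum_nbij' (fun p => ⟨insert p.1 p.2, p.1⟩) (fun p => ⟨p.2, p.1.erase p.2⟩)
    ?_ ?_ ?_ ?_ ?_
  · rintro ⟨i, q⟩ hp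
    simp only [Finset.mem_sigma, Finset.mem_powersetCard] at hp ⊢
    obtain ⟨-, hq, hc⟩ := hp
    have hiq : i ∉ q := fun h => (Finset.mem_erase.1 (hq h)).1 rfl
    exact ⟨⟨Finset.subset_univ _, by rw [Finset.card_insert_of_notMem hiq, hc]⟩,
      Finset.mem_insert_self _ _⟩
  · rintro ⟨q, i⟩ hp
    simp only [Finset.mem_sigma, Finset.mem_powersetCard] at hp ⊢
    obtain ⟨⟨-, hc⟩, hi⟩ := hp
    refine ⟨Finset.mem_univ _, fun j hj => Finset.mem_erase.2
      ⟨(Finset.mem_erase.1 hj).1, Finset.mem_univ _⟩, ?_⟩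
    rw [Finset.card_erase_of_mem hi, hc]
    omega
  · rintro ⟨i, q⟩ hp
    simp only [Finset.mem_sigma, Finset.mem_powersetCard] at hp
    obtain ⟨-, hq, -⟩ := hp
    have hiq : i ∉ q := fun h => (Finset.mem_erase.1 (hq h)).1 rfl
    simp [Finset.erase_insert hiq]
  · rintro ⟨q, i⟩ hp
    simp only [Finset.mem_sigma] at hp
    simp [Finset.insert_erase hp.2]
  · rintro ⟨i, q⟩ hp
    simp only [Finset.mem_sigma, Finset.mem_powersetCard] at hp
    obtain ⟨-, hq, -⟩ := hp
    have hiq : i ∉ q := fun h => (Finset.mem_erase.1 (hq h)).1 rfl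
    simp [Finset.erase_insert hiq]

/-- Identity B: `∑ i, e_t(L \ i) = (n - t) e_t(L)`. -/
lemma idB (x : Fin n → ℝ) (t : ℕ) (ht : t ≤ n) :
    ∑ i, E x (Finset.univ.erase i) t = ((n : ℝ) - t) * E x Finset.univ t := by
  have lhs : ∑ i, E x (Finset.univ.erase i) t =
      ∑ p ∈ (Finset.univ : Finset (Fin n)).sigma
        (fun i => (Finset.univ.erase i).powersetCard t), ∏ j ∈ p.2, x j := by
    rw [Finset.sum_sigma]
    rfl
  have rhs : ((n : ℝ) - t) * E x Finset.univ t =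
      ∑ p ∈ ((Finset.univ : Finset (Fin n)).powersetCard t).sigma (fun q => Finset.univ \ q),
        ∏ j ∈ p.1, x j := by
    rw [Finset.sum_sigma, E, Finset.mul_sum]
    refine Finset.sum_congr rfl fun q hq => ?_
    have hcard : q.card = t := (Finset.mem_powersetCard.1 hq).2
    dsimp only
    rw [Finset.sum_const, nsmul_eq_mul, Finset.card_sdiff_of_subset (Finset.subset_univ q),
      Finset.card_univ, Fintype.card_fin, hcard, Nat.cast_sub ht]
  rw [lhs, rhs]
  refine Finset.sum_nbij' (fun p => ⟨p.2, p.1⟩) (fun p => ⟨p.2, p.1⟩) ?_ ?_ ?_ ?_ ?_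
  · rintro ⟨i, q⟩ hp
    simp only [Finset.mem_sigma, Finset.mem_powersetCard, Finset.mem_sdiff] at hp ⊢
    obtain ⟨-, hq, hc⟩ := hp
    have hiq : i ∉ q := fun h => (Finset.mem_erase.1 (hq h)).1 rfl
    exact ⟨⟨Finset.subset_univ _, hc⟩, Finset.mem_univ _, hiq⟩
  · rintro ⟨q, i⟩ hp
    simp only [Finset.mem_sigma, Finset.mem_powersetCard, Finset.mem_sdiff] at hp ⊢
    obtain ⟨⟨-, hc⟩, -, hiq⟩ := hp
    exact ⟨Finset.mem_univ _, fun j hj => Finset.mem_erase.2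
      ⟨fun h => hiq (h ▸ hj), Finset.mem_univ _⟩, hc⟩
  · rintro ⟨i, q⟩ _; rfl
  · rintro ⟨q, i⟩ _; rfl
  · rintro ⟨i, q⟩ _; rfl

/-- Antivariance: larger `x i` means smaller complementary `e_t`. -/
lemma antivary {x : Fin n → ℝ} (hx : ∀ i, 0 ≤ x i) (m : ℕ) :
    Antivary (fun i => E x (Finset.univ.erase i) (m + 1)) x := by
  intro i j hij
  have hne : i ≠ j := fun h => lt_irrefl _ (h ▸ hij)
  set s : Finset (Fin n) := (Finset.univ.erase i).erase j with hs
  have hjs : j ∉ s := Finset.notMem_erase _ _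
  have his : i ∉ s := fun h => (Finset.mem_erase.1 (Finset.mem_erase.1 h).2).1 rfl
  have h1 : Finset.univ.erase i = insert j s := by
    rw [hs, Finset.insert_erase (Finset.mem_erase.2 ⟨Ne.symm hne, Finset.mem_univ _⟩)]
  have h2 : Finset.univ.erase j = insert i s := by
    rw [hs, Finset.erase_right_comm,
      Finset.insert_erase (Finset.mem_erase.2 ⟨hne, Finset.mem_univ _⟩)]
  show E x (Finset.univ.erase j) (m + 1) ≤ E x (Finset.univ.erase i) (m + 1)
  rw [h1, h2, E_insert x hjs, E_insert x his]
  have := mul_le_mul_of_nonneg_right hij.le (E_nonneg hx s m)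
  linarith

end Stmt19Aux

open Stmt19Aux in
/-- Let `L_1, ..., L_Λ` be positive integers summing to `K`, with `Λ ≥ 2` and
`t ∈ {1,...,Λ−1}`. When `Λ` divides `K`, among all such vectors `L` with fixed sum `K`
and all entries at least `1`, the ratio `e_{t+1}(L)/e_t(L)` is maximized by the uniform
vector `u = (K/Λ, ..., K/Λ)`: for any `L` with `Σ L_λ = K`,
`e_{t+1}(L)/e_t(L) ≤ e_{t+1}(u)/e_t(u)`. -/
theorem stmt19 (Λ K t : ℕ) (hΛ : 2 ≤ Λ) (ht1 : 1 ≤ t) (ht2 : t ≤ Λ - 1)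
    (hdvd : Λ ∣ K) (L : Fin Λ → ℕ) (hL : ∀ i, 1 ≤ L i) (hsum : ∑ i, L i = K) :
    esymm (fun i => (L i : ℝ)) (t + 1) / esymm (fun i => (L i : ℝ)) t ≤
      esymm (fun _ : Fin Λ => (K : ℝ) / (Λ : ℝ)) (t + 1) /
        esymm (fun _ : Fin Λ => (K : ℝ) / (Λ : ℝ)) t := by
  set x : Fin Λ → ℝ := fun i => (L i : ℝ) with hx
  have hx0 : ∀ i, 0 ≤ x i := fun i => Nat.cast_nonneg _
  have hx1 : ∀ i, 1 ≤ x i := fun i => by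
    show (1 : ℝ) ≤ (L i : ℝ); exact_mod_cast hL i
  have htΛ : t < Λ := by omega
  have htΛ' : t + 1 ≤ Λ := htΛ
  have hΛ0 : (0 : ℝ) < Λ := by positivity
  have hKΛ : Λ ≤ K := by
    rw [← hsum]
    calc (Λ : ℕ) = ∑ _i : Fin Λ, 1 := by simp
    _ ≤ ∑ i, L i := Finset.sum_le_sum fun i _ => hL i
  have hK0 : (0 : ℝ) < K := by
    have : 0 < K := lt_of_lt_of_le (by omega) hKΛ
    positivity
  -- positivity of e_t and e_{t+1}
  have Epos : ∀ k, k ≤ Λ → 0 < E x Finset.univ k := by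
    intro k hk
    refine Finset.sum_pos (fun q hq => Finset.prod_pos fun i _ => lt_of_lt_of_le one_pos (hx1 i)) ?_
    rw [Finset.powersetCard_nonempty]
    simpa using hk
  have het : 0 < E x Finset.univ t := Epos t htΛ.le
  -- Chebyshev
  have hsumx : ∑ i, x i = (K : ℝ) := by
    rw [hx, ← hsum]; push_cast; rfl
  obtain ⟨m, rfl⟩ : ∃ m, t = m + 1 := ⟨t - 1, by omega⟩
  have cheb := (antivary (x := x) hx0 m).card_mul_sum_le_sum_mul_sum
  rw [Fintype.card_fin] at cheb
  have hA := idA x (m + 1)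
  have hB := idB x (m + 1) htΛ.le
  push_cast at hA hB
  -- cheb : Λ * ∑ E^{i} * x i ≤ (∑ E^{i}) * (∑ x)
  have key : (Λ : ℝ) * ((m + 1 + 1 : ℝ) * E x Finset.univ (m + 1 + 1)) ≤
      (((Λ : ℝ) - (m + 1)) * E x Finset.univ (m + 1)) * K := by
    calc (Λ : ℝ) * ((m + 1 + 1 : ℝ) * E x Finset.univ (m + 1 + 1))
        = (Λ : ℝ) * ∑ i, E x (Finset.univ.erase i) (m + 1) * x i := by
          rw [← hA]; congr 1; rw [Finset.sum_congr rfl fun i _ => mul_comm (x i) _]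
      _ ≤ (∑ i, E x (Finset.univ.erase i) (m + 1)) * ∑ i, x i := cheb
      _ = (((Λ : ℝ) - (m + 1)) * E x Finset.univ (m + 1)) * K := by
          rw [hB, hsumx]
  -- compute RHS for the uniform vector
  set c : ℝ := (K : ℝ) / Λ with hc
  have hc0 : 0 < c := by positivity
  have Econst : ∀ k : ℕ, esymm (fun _ : Fin Λ => c) k = (Λ.choose k : ℝ) * c ^ k := by
    intro k
    rw [esymm]
    rw [Finset.sum_congr rfl fun q hq => show (∏ _i ∈ q, c) = c ^ k by
      rw [Finset.prod_const, (Finset.mem_powersetCard.1 hq).2]]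
    rw [Finset.sum_const, nsmul_eq_mul, Finset.card_powersetCard, Finset.card_univ,
      Fintype.card_fin]
  have hchoose_t : (0 : ℝ) < Λ.choose (m + 1) := by
    exact_mod_cast Nat.choose_pos (le_of_lt htΛ)
  have hchoose_t1 : (0 : ℝ) < Λ.choose (m + 1 + 1) := by
    exact_mod_cast Nat.choose_pos htΛ'
  have hratio : esymm (fun _ : Fin Λ => c) (m + 1 + 1) / esymm (fun _ : Fin Λ => c) (m + 1)
      = (((Λ : ℝ) - (m + 1)) * K) / (((m : ℝ) + 1 + 1) * Λ) := by
    rw [Econst, Econst]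
    have hcc : (Λ.choose (m + 1 + 1) : ℝ) * ((m : ℝ) + 1 + 1) =
        (Λ.choose (m + 1) : ℝ) * ((Λ : ℝ) - (m + 1)) := by
      have := Nat.choose_succ_right_eq Λ (m + 1)
      have h2 := congrArg (fun n : ℕ => (n : ℝ)) this
      push_cast [Nat.cast_sub htΛ.le] at h2
      convert h2 using 2 <;> push_cast <;> ring
    rw [pow_succ]
    rw [hc]
    field_simp
    linear_combination hcc
  have hesymm_eq : ∀ k, esymm x k = E x Finset.univ k := fun k => rfl
  rw [hesymm_eq, hesymm_eq, hratio]
  rw [div_le_div_iff₀ het (by positivity)]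
  calc E x Finset.univ (m + 1 + 1) * (((m : ℝ) + 1 + 1) * Λ)
      = (Λ : ℝ) * ((m + 1 + 1 : ℝ) * E x Finset.univ (m + 1 + 1)) := by push_cast; ring
    _ ≤ (((Λ : ℝ) - (m + 1)) * E x Finset.univ (m + 1)) * K := key
    _ = ((Λ : ℝ) - (m + 1)) * K * E x Finset.univ (m + 1) := by ring
end
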